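/- Let q be a positive integer, R ⊆ Z_q, and define c(i) = +1 if i ∈ R and c(i) = −1 if i ∈ Z_q \ R. For an integer s with 1 ≤ s ≤ q and a sign pattern (ε_0,…,ε_{s−1}) ∈ {−1,+1}^s, let Γ(ε_0,…,ε_{s−1}) = |{n : 0 ≤ n ≤ q−s, c(n+i) = ε_i for all i = 0,…,s−1}| and let z be the number of indices i with ε_i = +1. Then |Γ(ε_0,…,ε_{s−1}) − (|R|/q)^z (1 − |R|/q)^{s−z} q| ≤ (s−1) + 2^s · C(R,q,s). -/
import Mathlib


open Finset Filter

/-- The function `f_R` from the paper: `1 - |R|/q` on `R`, `-|R|/q` off `R`. -/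
noncomputable def fsub (q : ℕ) (R : Finset ℕ) (n : ℕ) : ℝ :=
  if n % q ∈ R then 1 - (R.card : ℝ) / q else -((R.card : ℝ) / q)

/-- The correlation measure `C_k(R,q)` of order `k` of a subset `R ⊆ Z_q`. -/
noncomputable def corrK (R : Finset ℕ) (q k : ℕ) : ℝ :=
  sSup {x : ℝ | ∃ (M : ℕ) (d : Fin k → ℕ), 1 ≤ M ∧ M ≤ q ∧ StrictMono d ∧
    (∀ i, d i ≤ q - 1) ∧ x = |∑ n ∈ Finset.range M, ∏ i, fsub q R (n + d i)|}

/-- `C(R,q,s) = max_{1 ≤ k ≤ s} C_k(R,q)`. -/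
noncomputable def corrMeasure (R : Finset ℕ) (q s : ℕ) : ℝ :=
  sSup {x : ℝ | ∃ k, 1 ≤ k ∧ k ≤ s ∧ x = corrK R q k}

lemma fsub_abs_le (q : ℕ) (hq : 0 < q) (R : Finset ℕ) (hR : R ⊆ Finset.range q) (n : ℕ) :
    |fsub q R n| ≤ 1 := by
  have hq' : (0:ℝ) < q := by exact_mod_cast hq
  have hcard : (R.card : ℝ) ≤ q := by
    have := Finset.card_le_card hR
    rw [Finset.card_range] at this
    exact_mod_cast this
  have hp0 : (0:ℝ) ≤ (R.card : ℝ) / q := by positivity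
  have hp1 : (R.card : ℝ) / q ≤ 1 := by rw [div_le_one hq']; exact hcard
  unfold fsub
  split <;> rw [abs_le] <;> constructor <;> linarith

lemma corr_sum_le (q : ℕ) (hq : 0 < q) (R : Finset ℕ) (hR : R ⊆ Finset.range q)
    (M : ℕ) (hM : M ≤ q) (k : ℕ) (d : Fin k → ℕ) :
    |∑ n ∈ Finset.range M, ∏ i, fsub q R (n + d i)| ≤ q := by
  calc |∑ n ∈ Finset.range M, ∏ i, fsub q R (n + d i)|
      ≤ ∑ n ∈ Finset.range M, |∏ i, fsub q R (n + d i)| := Finset.abs_sum_le_sum_abs _ _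
    _ ≤ ∑ _n ∈ Finset.range M, 1 := by
        refine Finset.sum_le_sum fun n _ => ?_
        rw [Finset.abs_prod]
        exact Finset.prod_le_one (fun i _ => abs_nonneg _) (fun i _ => fsub_abs_le q hq R hR _)
    _ = M := by simp
    _ ≤ q := by exact_mod_cast hM

lemma corrK_le (q : ℕ) (hq : 0 < q) (R : Finset ℕ) (hR : R ⊆ Finset.range q) (k : ℕ) :
    corrK R q k ≤ q := by
  apply Real.sSup_le
  · rintro x ⟨M, d, hM1, hMq, _, _, rfl⟩
    exact corr_sum_le q hq R hR M hMq k d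
  · exact_mod_cast hq.le

lemma corr_witness_le (q : ℕ) (hq : 0 < q) (R : Finset ℕ) (hR : R ⊆ Finset.range q)
    (s : ℕ) (hs1 : 1 ≤ s) (hsq : s ≤ q) (u : Finset (Fin s)) (hu : u.Nonempty) :
    |∑ n ∈ Finset.range (q - s + 1), ∏ i ∈ u, fsub q R (n + (i : ℕ))| ≤ corrMeasure R q s := by
  set k := u.card with hk
  have hk1 : 1 ≤ k := Finset.card_pos.mpr hu
  have hks : k ≤ s := le_trans (Finset.card_le_univ u) (by simp)
  set d : Fin k → ℕ := fun j => ((u.orderIsoOfFin hk.symm j : Fin s) : ℕ) with hd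
  have hmono : StrictMono d := by
    intro a b hab
    have h1 := (u.orderIsoOfFin hk.symm).strictMono hab
    exact h1
  have hdle : ∀ j, d j ≤ q - 1 := by
    intro j
    have : d j < s := (u.orderIsoOfFin hk.symm j : Fin s).isLt
    omega
  have hprod : ∀ n, ∏ i ∈ u, fsub q R (n + (i : ℕ)) = ∏ j : Fin k, fsub q R (n + d j) := by
    intro n
    rw [← Finset.prod_coe_sort u (fun i => fsub q R (n + (i : ℕ)))]
    exact (Equiv.prod_comp (u.orderIsoOfFin hk.symm).toEquiv
      (fun x => fsub q R (n + ((x : Fin s) : ℕ)))).symm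
  have hM1 : 1 ≤ q - s + 1 := Nat.le_add_left 1 (q - s)
  have hMq : q - s + 1 ≤ q := by omega
  have hbddK : BddAbove {x : ℝ | ∃ (M : ℕ) (d : Fin k → ℕ), 1 ≤ M ∧ M ≤ q ∧ StrictMono d ∧
      (∀ i, d i ≤ q - 1) ∧ x = |∑ n ∈ Finset.range M, ∏ i, fsub q R (n + d i)|} := by
    refine ⟨q, ?_⟩
    rintro x ⟨M, d', _, hMq', _, _, rfl⟩
    exact corr_sum_le q hq R hR M hMq' k d'
  have h1 : |∑ n ∈ Finset.range (q - s + 1), ∏ j : Fin k, fsub q R (n + d j)| ≤ corrK R q k :=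
    le_csSup hbddK ⟨q - s + 1, d, hM1, hMq, hmono, hdle, rfl⟩
  have hbddM : BddAbove {x : ℝ | ∃ k', 1 ≤ k' ∧ k' ≤ s ∧ x = corrK R q k'} := by
    refine ⟨q, ?_⟩
    rintro x ⟨k', _, _, rfl⟩
    exact corrK_le q hq R hR k'
  have h2 : corrK R q k ≤ corrMeasure R q s :=
    le_csSup hbddM ⟨k, hk1, hks, rfl⟩
  calc |∑ n ∈ Finset.range (q - s + 1), ∏ i ∈ u, fsub q R (n + (i : ℕ))|
      = |∑ n ∈ Finset.range (q - s + 1), ∏ j : Fin k, fsub q R (n + d j)| := by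
        congr 1; exact Finset.sum_congr rfl fun n _ => hprod n
    _ ≤ corrK R q k := h1
    _ ≤ corrMeasure R q s := h2
theorem statement0 (q : ℕ) (hq : 0 < q) (R : Finset ℕ) (hR : R ⊆ Finset.range q)
    (s : ℕ) (hs1 : 1 ≤ s) (hsq : s ≤ q) (ε : Fin s → ℤ) (hε : ∀ i, ε i = 1 ∨ ε i = -1) :
    |(((Finset.range (q - s + 1)).filter
          (fun n => ∀ i : Fin s, (if n + (i : ℕ) ∈ R then (1 : ℤ) else -1) = ε i)).card : ℝ) -
        ((R.card : ℝ) / q) ^ ((Finset.univ.filter fun i : Fin s => ε i = 1).card) *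
          (1 - (R.card : ℝ) / q) ^ (s - (Finset.univ.filter fun i : Fin s => ε i = 1).card) * q| ≤
      ((s : ℝ) - 1) + 2 ^ s * corrMeasure R q s := by
  have hq' : (0:ℝ) < q := by exact_mod_cast hq
  have hcard : (R.card : ℝ) ≤ q := by
    have := Finset.card_le_card hR
    rw [Finset.card_range] at this
    exact_mod_cast this
  set p : ℝ := (R.card : ℝ) / q with hp
  have hp0 : 0 ≤ p := by positivity
  have hp1 : p ≤ 1 := by rw [hp, div_le_one hq']; exact hcard
  set N := q - s + 1 with hN
  set z := (Finset.univ.filter fun i : Fin s => ε i = 1).card with hz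
  set A : Fin s → ℝ := fun i => if ε i = 1 then p else 1 - p with hA
  set B : ℕ → Fin s → ℝ := fun n i => (ε i : ℝ) * fsub q R (n + (i : ℕ)) with hB
  set C := corrMeasure R q s with hCdef
  have hC0 : 0 ≤ C := by
    refine le_trans (abs_nonneg _) (corr_witness_le q hq R hR s hs1 hsq Finset.univ ?_)
    exact ⟨⟨0, hs1⟩, Finset.mem_univ _⟩
  -- the factor identity
  have hfs : ∀ n ∈ Finset.range N, ∀ i : Fin s,
      A i + B n i = if (if n + (i : ℕ) ∈ R then (1 : ℤ) else -1) = ε i then (1:ℝ) else 0 := by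
    intro n hn i
    have hlt : n + (i : ℕ) < q := by
      have h1 := Finset.mem_range.mp hn
      have h2 := i.isLt
      omega
    have hf : fsub q R (n + (i : ℕ)) = if n + (i : ℕ) ∈ R then 1 - p else -p := by
      unfold fsub; rw [Nat.mod_eq_of_lt hlt]
    rcases hε i with h1 | h1 <;> by_cases hm : n + (i : ℕ) ∈ R <;>
      simp [hA, hB, hf, h1, hm] <;> ring
  -- Γ as a sum
  have hGamma : (((Finset.range N).filter
        (fun n => ∀ i : Fin s, (if n + (i : ℕ) ∈ R then (1 : ℤ) else -1) = ε i)).card : ℝ)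
      = ∑ n ∈ Finset.range N, ∏ i : Fin s, (A i + B n i) := by
    rw [Finset.card_filter]
    push_cast
    refine Finset.sum_congr rfl fun n hn => ?_
    rw [Finset.prod_congr rfl fun i _ => hfs n hn i, Finset.prod_boole]
    simp
  -- expansion
  have hexp : ∑ n ∈ Finset.range N, ∏ i : Fin s, (A i + B n i)
      = ∑ t ∈ (Finset.univ : Finset (Fin s)).powerset,
          (∏ i ∈ t, A i) * ∑ n ∈ Finset.range N, ∏ i ∈ Finset.univ \ t, B n i := by
    calc ∑ n ∈ Finset.range N, ∏ i : Fin s, (A i + B n i)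
        = ∑ n ∈ Finset.range N, ∑ t ∈ (Finset.univ : Finset (Fin s)).powerset,
            (∏ i ∈ t, A i) * ∏ i ∈ Finset.univ \ t, B n i :=
          Finset.sum_congr rfl fun n _ => Finset.prod_add _ _ _
      _ = ∑ t ∈ (Finset.univ : Finset (Fin s)).powerset, ∑ n ∈ Finset.range N,
            (∏ i ∈ t, A i) * ∏ i ∈ Finset.univ \ t, B n i := Finset.sum_comm
      _ = _ := Finset.sum_congr rfl fun t _ => (Finset.mul_sum _ _ _).symm
  -- product of A
  have hP : ∏ i : Fin s, A i = p ^ z * (1 - p) ^ (s - z) := by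
    rw [hA, Finset.prod_ite _ _]
    rw [Finset.prod_const, Finset.prod_const]
    have hcount : (Finset.univ.filter fun i : Fin s => ¬ ε i = 1).card = s - z := by
      have := Finset.card_filter_add_card_filter_not
        (s := (Finset.univ : Finset (Fin s))) (p := fun i : Fin s => ε i = 1)
      simp only [Finset.card_univ, Fintype.card_fin] at this
      omega
    rw [hcount, hz]
  have hP0 : 0 ≤ ∏ i : Fin s, A i := by
    rw [hP]
    exact mul_nonneg (pow_nonneg hp0 _) (pow_nonneg (by linarith) _)
  have hP1 : ∏ i : Fin s, A i ≤ 1 := by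
    refine Finset.prod_le_one (fun i _ => ?_) (fun i _ => ?_) <;> simp only [hA] <;>
      split <;> linarith
  -- the main term extraction
  have huniv_mem : (Finset.univ : Finset (Fin s)) ∈ (Finset.univ : Finset (Fin s)).powerset :=
    Finset.mem_powerset_self _
  have hsplit : ∑ t ∈ (Finset.univ : Finset (Fin s)).powerset,
          (∏ i ∈ t, A i) * ∑ n ∈ Finset.range N, ∏ i ∈ Finset.univ \ t, B n i
      = (∑ t ∈ ((Finset.univ : Finset (Fin s)).powerset).erase Finset.univ,
          (∏ i ∈ t, A i) * ∑ n ∈ Finset.range N, ∏ i ∈ Finset.univ \ t, B n i)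
        + (∏ i : Fin s, A i) * N := by
    rw [← Finset.sum_erase_add _ _ huniv_mem]
    congr 1
    rw [Finset.sdiff_self]
    simp
  -- bound each error term
  have hterm : ∀ t ∈ ((Finset.univ : Finset (Fin s)).powerset).erase Finset.univ,
      |(∏ i ∈ t, A i) * ∑ n ∈ Finset.range N, ∏ i ∈ Finset.univ \ t, B n i| ≤ C := by
    intro t ht
    have htne : t ≠ Finset.univ := (Finset.mem_erase.mp ht).1
    have hune : (Finset.univ \ t).Nonempty := by
      rw [Finset.sdiff_nonempty]
      intro hsub
      exact htne (Finset.univ_subset_iff.mp hsub)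
    have hAt0 : 0 ≤ ∏ i ∈ t, A i := by
      refine Finset.prod_nonneg fun i _ => ?_
      simp only [hA]; split <;> linarith
    have hAt1 : ∏ i ∈ t, A i ≤ 1 := by
      refine Finset.prod_le_one (fun i _ => ?_) (fun i _ => ?_) <;> simp only [hA] <;>
        split <;> linarith
    have hBsum : |∑ n ∈ Finset.range N, ∏ i ∈ Finset.univ \ t, B n i| ≤ C := by
      have hsplitB : ∀ n, ∏ i ∈ Finset.univ \ t, B n i
          = (∏ i ∈ Finset.univ \ t, (ε i : ℝ)) * ∏ i ∈ Finset.univ \ t, fsub q R (n + (i : ℕ)) := by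
        intro n
        rw [hB, ← Finset.prod_mul_distrib]
      have habs_eps : |∏ i ∈ Finset.univ \ t, (ε i : ℝ)| = 1 := by
        rw [Finset.abs_prod]
        refine Finset.prod_eq_one fun i _ => ?_
        rcases hε i with h | h <;> rw [h] <;> norm_num
      calc |∑ n ∈ Finset.range N, ∏ i ∈ Finset.univ \ t, B n i|
          = |(∏ i ∈ Finset.univ \ t, (ε i : ℝ)) *
              ∑ n ∈ Finset.range N, ∏ i ∈ Finset.univ \ t, fsub q R (n + (i : ℕ))| := by
            rw [Finset.mul_sum]
            congr 1
            exact Finset.sum_congr rfl fun n _ => hsplitB n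
        _ = |∏ i ∈ Finset.univ \ t, (ε i : ℝ)| *
              |∑ n ∈ Finset.range N, ∏ i ∈ Finset.univ \ t, fsub q R (n + (i : ℕ))| := abs_mul _ _
        _ = |∑ n ∈ Finset.range N, ∏ i ∈ Finset.univ \ t, fsub q R (n + (i : ℕ))| := by
            rw [habs_eps, one_mul]
        _ ≤ C := corr_witness_le q hq R hR s hs1 hsq _ hune
    calc |(∏ i ∈ t, A i) * ∑ n ∈ Finset.range N, ∏ i ∈ Finset.univ \ t, B n i|
        = |∏ i ∈ t, A i| * |∑ n ∈ Finset.range N, ∏ i ∈ Finset.univ \ t, B n i| := abs_mul _ _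
      _ ≤ 1 * C := by
          refine mul_le_mul ?_ hBsum (abs_nonneg _) zero_le_one
          rw [abs_of_nonneg hAt0]; exact hAt1
      _ = C := one_mul C
  -- bound the error sum
  have herr : |∑ t ∈ ((Finset.univ : Finset (Fin s)).powerset).erase Finset.univ,
        (∏ i ∈ t, A i) * ∑ n ∈ Finset.range N, ∏ i ∈ Finset.univ \ t, B n i| ≤ 2 ^ s * C := by
    calc |∑ t ∈ ((Finset.univ : Finset (Fin s)).powerset).erase Finset.univ,
          (∏ i ∈ t, A i) * ∑ n ∈ Finset.range N, ∏ i ∈ Finset.univ \ t, B n i|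
        ≤ ∑ t ∈ ((Finset.univ : Finset (Fin s)).powerset).erase Finset.univ,
            |(∏ i ∈ t, A i) * ∑ n ∈ Finset.range N, ∏ i ∈ Finset.univ \ t, B n i| :=
          Finset.abs_sum_le_sum_abs _ _
      _ ≤ ∑ _t ∈ ((Finset.univ : Finset (Fin s)).powerset).erase Finset.univ, C :=
          Finset.sum_le_sum hterm
      _ = (((Finset.univ : Finset (Fin s)).powerset).erase Finset.univ).card * C := by
          rw [Finset.sum_const, nsmul_eq_mul]
      _ ≤ 2 ^ s * C := by
          refine mul_le_mul_of_nonneg_right ?_ hC0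
          have h1 : (((Finset.univ : Finset (Fin s)).powerset).erase Finset.univ).card
              ≤ ((Finset.univ : Finset (Fin s)).powerset).card := Finset.card_erase_le
          have h2 : ((Finset.univ : Finset (Fin s)).powerset).card = 2 ^ s := by
            rw [Finset.card_powerset, Finset.card_univ, Fintype.card_fin]
          have : (((Finset.univ : Finset (Fin s)).powerset).erase Finset.univ).card ≤ 2 ^ s := by
            omega
          calc ((((Finset.univ : Finset (Fin s)).powerset).erase Finset.univ).card : ℝ)
              ≤ ((2 ^ s : ℕ) : ℝ) := by exact_mod_cast this
            _ = 2 ^ s := by push_cast; ring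
  -- main term adjustment
  have hNcast : (N : ℝ) = (q : ℝ) - s + 1 := by
    rw [hN]; push_cast [Nat.cast_sub hsq]; ring
  have hmain : |(∏ i : Fin s, A i) * N - p ^ z * (1 - p) ^ (s - z) * q| ≤ (s : ℝ) - 1 := by
    rw [hP, hNcast]
    have hPz0 : 0 ≤ p ^ z * (1 - p) ^ (s - z) :=
      mul_nonneg (pow_nonneg hp0 _) (pow_nonneg (by linarith) _)
    have hPz1 : p ^ z * (1 - p) ^ (s - z) ≤ 1 := by
      calc p ^ z * (1 - p) ^ (s - z) ≤ 1 * 1 := by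
            refine mul_le_mul ?_ ?_ (pow_nonneg (by linarith) _) zero_le_one
            · exact pow_le_one₀ hp0 hp1
            · exact pow_le_one₀ (by linarith) (by linarith)
        _ = 1 := one_mul 1
    have hs1' : (1:ℝ) ≤ s := by exact_mod_cast hs1
    have : p ^ z * (1 - p) ^ (s - z) * ((q : ℝ) - s + 1) - p ^ z * (1 - p) ^ (s - z) * q
        = p ^ z * (1 - p) ^ (s - z) * (1 - s) := by ring
    rw [this]
    rw [abs_mul, abs_of_nonneg hPz0]
    have habs : |(1:ℝ) - s| = (s:ℝ) - 1 := by
      rw [abs_sub_comm]; exact abs_of_nonneg (by linarith)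
    rw [habs]
    nlinarith
  -- assemble
  rw [← hp, ← hz, ← hCdef, ← hN] at *
  rw [hGamma, hexp, hsplit]
  calc |(∑ t ∈ ((Finset.univ : Finset (Fin s)).powerset).erase Finset.univ,
          (∏ i ∈ t, A i) * ∑ n ∈ Finset.range N, ∏ i ∈ Finset.univ \ t, B n i)
        + (∏ i : Fin s, A i) * N - p ^ z * (1 - p) ^ (s - z) * q|
      ≤ |∑ t ∈ ((Finset.univ : Finset (Fin s)).powerset).erase Finset.univ,
          (∏ i ∈ t, A i) * ∑ n ∈ Finset.range N, ∏ i ∈ Finset.univ \ t, B n i|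
        + |(∏ i : Fin s, A i) * N - p ^ z * (1 - p) ^ (s - z) * q| := by
        have := abs_add_le (∑ t ∈ ((Finset.univ : Finset (Fin s)).powerset).erase Finset.univ,
          (∏ i ∈ t, A i) * ∑ n ∈ Finset.range N, ∏ i ∈ Finset.univ \ t, B n i)
          ((∏ i : Fin s, A i) * N - p ^ z * (1 - p) ^ (s - z) * q)
        calc |(∑ t ∈ ((Finset.univ : Finset (Fin s)).powerset).erase Finset.univ,
                (∏ i ∈ t, A i) * ∑ n ∈ Finset.range N, ∏ i ∈ Finset.univ \ t, B n i)
              + (∏ i : Fin s, A i) * N - p ^ z * (1 - p) ^ (s - z) * q|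
            = |(∑ t ∈ ((Finset.univ : Finset (Fin s)).powerset).erase Finset.univ,
                (∏ i ∈ t, A i) * ∑ n ∈ Finset.range N, ∏ i ∈ Finset.univ \ t, B n i)
              + ((∏ i : Fin s, A i) * N - p ^ z * (1 - p) ^ (s - z) * q)| := by
                rw [add_sub_assoc]
          _ ≤ _ := this
    _ ≤ 2 ^ s * C + ((s : ℝ) - 1) := add_le_add herr hmain
    _ = ((s : ℝ) - 1) + 2 ^ s * C := by ring
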